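/- arXiv:0803.1540 — 2 statements merged into one kernel-verified Lean document; each statement's English description precedes it below -/
import Mathlib

section
/- Let U be a finite-dimensional real vector space with k alternating bilinear forms ω¹,…,ω^k, and let H, S be subspaces with D = H ⊕ S where S = D^⊥ and D^⊥ ⊆ D. Then H ∩ H^⊥ = {0}, i.e. H is a k-symplectic subspace. -/
/-! Take `u ∈ H ∩ H^⊥`. Since the forms are alternating, orthogonality is symmetric, so `u ∈ D`
is orthogonal to `D^⊥`; being orthogonal to `H` as well, it is orthogonal to `H + D^⊥ = D`.
Hence `u ∈ H ∩ D^⊥ = 0`. -/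

/-- The k-symplectic orthogonal of a subspace. -/
def kPerp {U : Type*} [AddCommGroup U] [Module ℝ U] {k : ℕ}
    (ω : Fin k → U →ₗ[ℝ] U →ₗ[ℝ] ℝ) (W : Submodule ℝ U) : Submodule ℝ U where
  carrier := {u | ∀ w ∈ W, ∀ A, ω A u w = 0}
  zero_mem' := by intro w hw A; simp
  add_mem' := by
    intro a b ha hb w hw A
    simp [ha w hw A, hb w hw A]
  smul_mem' := by
    intro c a ha w hw A
    simp [ha w hw A]

theorem mem_kPerp {U : Type*} [AddCommGroup U] [Module ℝ U] {k : ℕ}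
    (ω : Fin k → U →ₗ[ℝ] U →ₗ[ℝ] ℝ) (W : Submodule ℝ U) (u : U) :
    u ∈ kPerp ω W ↔ ∀ w ∈ W, ∀ A, ω A u w = 0 := Iff.rfl

section
variable {U : Type*} [AddCommGroup U] [Module ℝ U] {k : ℕ} (ω : Fin k → U →ₗ[ℝ] U →ₗ[ℝ] ℝ)

theorem kPerp_sup (W₁ W₂ : Submodule ℝ U) :
    kPerp ω (W₁ ⊔ W₂) = kPerp ω W₁ ⊓ kPerp ω W₂ := by
  ext u
  simp only [Submodule.mem_inf, mem_kPerp]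
  constructor
  · intro h
    exact ⟨fun w hw => h w (Submodule.mem_sup_left hw),
      fun w hw => h w (Submodule.mem_sup_right hw)⟩
  · rintro ⟨h₁, h₂⟩ w hw A
    obtain ⟨w₁, hw₁, w₂, hw₂, rfl⟩ := Submodule.mem_sup.mp hw
    simp [h₁ w₁ hw₁ A, h₂ w₂ hw₂ A]

theorem le_kPerp_kPerp (hrefl : ∀ A, (ω A).IsRefl) (W : Submodule ℝ U) :
    W ≤ kPerp ω (kPerp ω W) :=
  fun w hw u hu A => hrefl A u w (hu w hw A)

end

theorem complement_is_kSymplectic_general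
    {U : Type*} [AddCommGroup U] [Module ℝ U] {k : ℕ}
    (ω : Fin k → U →ₗ[ℝ] U →ₗ[ℝ] ℝ)
    (halt : ∀ A : Fin k, ∀ u : U, ω A u u = 0)
    (D H : Submodule ℝ U)
    (hsum : H ⊔ kPerp ω D = D)
    (hdisj : H ⊓ kPerp ω D = ⊥) :
    H ⊓ kPerp ω H = ⊥ := by
  have hHD : H ≤ kPerp ω (kPerp ω D) :=
    (hsum ▸ le_sup_left : H ≤ D).trans
      (le_kPerp_kPerp ω (fun A => LinearMap.IsAlt.isRefl (halt A)) D)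
  have hperp : kPerp ω H ⊓ kPerp ω (kPerp ω D) = kPerp ω D := by
    rw [← kPerp_sup, hsum]
  rw [eq_bot_iff, ← hdisj, ← hperp]
  exact le_inf inf_le_left (le_inf inf_le_right (inf_le_left.trans hHD))

/-- if D is k-coisotropic with S = D^⊥ and D = H ⊕ S, then
H ∩ H^⊥ = 0, i.e. H is a k-symplectic subspace. -/
theorem complement_is_kSymplectic
    {U : Type*} [AddCommGroup U] [Module ℝ U] [FiniteDimensional ℝ U] {k : ℕ}
    (ω : Fin k → U →ₗ[ℝ] U →ₗ[ℝ] ℝ)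
    (halt : ∀ A : Fin k, ∀ u : U, ω A u u = 0)
    (hker : ∀ u : U, (∀ A : Fin k, ∀ v : U, ω A u v = 0) → u = 0)
    (D H : Submodule ℝ U)
    (hcoiso : kPerp ω D ≤ D)
    (hsum : H ⊔ kPerp ω D = D)
    (hdisj : H ⊓ kPerp ω D = ⊥) :
    H ⊓ kPerp ω H = ⊥ :=
  complement_is_kSymplectic_general ω halt D H hsum hdisj
end

section
/- Let U be a finite-dimensional real vector space with k alternating bilinear forms ω¹,…,ω^k, D a k-coisotropic subspace (D^⊥ ⊆ D), T a subspace, and H = T ∩ D. If H ∩ H^⊥ = {0}, then T ∩ D^⊥ = {0}. -/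
theorem kPerp_anti {U : Type*} [AddCommGroup U] [Module ℝ U] {k : ℕ}
    (ω : Fin k → U →ₗ[ℝ] U →ₗ[ℝ] ℝ) {W W' : Submodule ℝ U} (h : W ≤ W') :
    kPerp ω W' ≤ kPerp ω W :=
  fun _ hu w hw A => hu w (h hw) A

theorem compatibility_of_kSymplectic_general
    {U : Type*} [AddCommGroup U] [Module ℝ U] {k : ℕ}
    (ω : Fin k → U →ₗ[ℝ] U →ₗ[ℝ] ℝ)
    (D T : Submodule ℝ U)
    (hcoiso : kPerp ω D ≤ D)
    (hH : (T ⊓ D) ⊓ kPerp ω (T ⊓ D) = ⊥) :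
    T ⊓ kPerp ω D = ⊥ := by
  rw [eq_bot_iff, ← hH]
  exact le_inf (inf_le_inf_left T hcoiso) (inf_le_right.trans (kPerp_anti ω inf_le_right))

/-- if D is k-coisotropic, H = T ∩ D and H ∩ H^⊥ = 0, then
T ∩ D^⊥ = 0. -/
theorem compatibility_of_kSymplectic
    {U : Type*} [AddCommGroup U] [Module ℝ U] [FiniteDimensional ℝ U] {k : ℕ}
    (ω : Fin k → U →ₗ[ℝ] U →ₗ[ℝ] ℝ)
    (halt : ∀ A : Fin k, ∀ u : U, ω A u u = 0)
    (D T : Submodule ℝ U)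
    (hcoiso : kPerp ω D ≤ D)
    (hH : (T ⊓ D) ⊓ kPerp ω (T ⊓ D) = ⊥) :
    T ⊓ kPerp ω D = ⊥ :=
  compatibility_of_kSymplectic_general ω D T hcoiso hH
end
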